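/- arXiv:2505.09163 — 2 statements merged into one kernel-verified Lean document; each statement's English description precedes it below -/
import Mathlib

section
/- Let D < 0 with D ≡ 0 or 1 (mod 4) and let K = ℚ(√D). For a primitive positive definite form Q = ax² + bxy + cy² of discriminant D with root ω_Q = (-b+√D)/(2a), the ℤ-module ℤω_Q + ℤ is a proper fractional ideal of the order 𝒪 = ℤ[(D+√D)/2] of discriminant D in K. -/
/-- For `D < 0`, `√D` denotes `i·√|D|`. -/
noncomputable def sqrtD (D : ℤ) : ℂ := Complex.I * Real.sqrt (-(D : ℝ))

/-- The root `ω_Q = (-b + √D)/(2a)`. -/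
noncomputable def omegaQ (D a b : ℤ) : ℂ := (-(b : ℂ) + sqrtD D) / (2 * (a : ℂ))

/-!
If `a ω² + b ω + c = 0` with `ω` non-real and `gcd(a, b, c) = 1`, then `x ∈ ℂ` maps `ℤω + ℤ`
into itself iff `x = mω + n` and `xω ∈ ℤω + ℤ`; reducing `x ω` with the quadratic relation and
comparing coefficients in the basis `1, ω` gives `a ∣ m b` and `a ∣ m c`, hence `a ∣ m`. So the
multiplier ring is `ℤ(aω) + ℤ`, and `aω = (D + √D)/2 - (D + b)/2` with `D + b ≡ b² + b ≡ 0 (mod 2)`.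
-/

def intLattice (ω : ℂ) : Set ℂ := {z | ∃ m n : ℤ, z = m * ω + n}

def multipliers (L : Set ℂ) : Set ℂ := {x | ∀ y ∈ L, x * y ∈ L}

lemma intLattice_add_intCast (ω : ℂ) (k : ℤ) : intLattice (ω + k) = intLattice ω := by
  ext z
  constructor
  · rintro ⟨m, n, rfl⟩
    exact ⟨m, m * k + n, by push_cast; ring⟩
  · rintro ⟨m, n, rfl⟩
    exact ⟨m, n - m * k, by push_cast; ring⟩

lemma Int.eq_zero_of_intCast_mul_eq_intCast {ω : ℂ} (hω : ω.im ≠ 0) {u v : ℤ}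
    (h : (u : ℂ) * ω = v) : u = 0 ∧ v = 0 := by
  have hu : u = 0 := by
    simpa [Complex.mul_im, hω] using congrArg Complex.im h
  subst hu
  rw [Int.cast_zero, zero_mul] at h
  exact ⟨rfl, by exact_mod_cast h.symm⟩

lemma Int.dvd_of_dvd_mul_of_gcd_gcd_eq_one {a b c m : ℤ} (h : Int.gcd a (Int.gcd b c) = 1)
    (hb : a ∣ m * b) (hc : a ∣ m * c) : a ∣ m := by
  have hbc : a ∣ Int.gcd b c * m := by
    rw [Int.gcd_eq_gcd_ab b c, add_mul, mul_right_comm, mul_right_comm c]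
    exact dvd_add ((mul_comm m b ▸ hb).mul_right _) ((mul_comm m c ▸ hc).mul_right _)
  exact (Int.isCoprime_iff_gcd_eq_one.2 h).dvd_of_dvd_mul_left hbc

lemma multipliers_intLattice_of_quadratic {ω : ℂ} {a b c : ℤ} (hω : ω.im ≠ 0)
    (hprim : Int.gcd a (Int.gcd b c) = 1) (hquad : a * ω ^ 2 + b * ω + c = 0) :
    multipliers (intLattice ω) = intLattice (a * ω) := by
  ext x
  constructor
  · intro hx
    obtain ⟨m, n, hx1⟩ := hx 1 ⟨0, 1, by simp⟩
    rw [mul_one] at hx1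
    obtain ⟨p, q, hxω⟩ := hx ω ⟨1, 0, by simp⟩
    have hrel : ((n * a - m * b - p * a : ℤ) : ℂ) * ω = (q * a + m * c : ℤ) := by
      rw [hx1] at hxω
      push_cast
      linear_combination (a : ℂ) * hxω - (m : ℂ) * hquad
    obtain ⟨hb, hc⟩ := Int.eq_zero_of_intCast_mul_eq_intCast hω hrel
    obtain ⟨M, rfl⟩ := Int.dvd_of_dvd_mul_of_gcd_gcd_eq_one (m := m) hprim
      ⟨n - p, by linear_combination -hb⟩ ⟨-q, by linear_combination hc⟩
    exact ⟨M, n, by rw [hx1]; push_cast; ring⟩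
  · rintro ⟨M, N, rfl⟩ y ⟨p, q, rfl⟩
    refine ⟨M * a * q + N * p - M * p * b, N * q - M * p * c, ?_⟩
    push_cast
    linear_combination ((M : ℂ) * p) * hquad

lemma sqrtD_sq {D : ℤ} (hD : D ≤ 0) : sqrtD D ^ 2 = D := by
  have hD' : (0 : ℝ) ≤ -(D : ℝ) := by simpa using (Int.cast_nonpos.2 hD : (D : ℝ) ≤ 0)
  rw [sqrtD, mul_pow, Complex.I_sq, ← Complex.ofReal_pow, Real.sq_sqrt hD']
  push_cast
  ring

lemma omegaQ_im (D a b : ℤ) : (omegaQ D a b).im = √(-(D : ℝ)) / (2 * a) := by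
  rw [omegaQ, sqrtD, show 2 * (a : ℂ) = ((2 * a : ℝ) : ℂ) by push_cast; rfl,
    Complex.div_ofReal_im]
  simp

lemma omegaQ_im_ne_zero {D a : ℤ} (hD : D < 0) (ha : a ≠ 0) (b : ℤ) : (omegaQ D a b).im ≠ 0 := by
  rw [omegaQ_im]
  have hD' : (0 : ℝ) < -(D : ℝ) := by simpa using (Int.cast_lt_zero.2 hD : (D : ℝ) < 0)
  have ha' : (a : ℝ) ≠ 0 := by exact_mod_cast ha
  exact div_ne_zero (Real.sqrt_pos.2 hD').ne' (mul_ne_zero two_ne_zero ha')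

lemma omegaQ_quadratic {D a b c : ℤ} (hD : D ≤ 0) (ha : a ≠ 0) (hdisc : b ^ 2 - 4 * a * c = D) :
    a * omegaQ D a b ^ 2 + b * omegaQ D a b + c = 0 := by
  have hdisc' : (b : ℂ) ^ 2 - 4 * a * c = D := by exact_mod_cast hdisc
  have ha' : (a : ℂ) ≠ 0 := by exact_mod_cast ha
  rw [omegaQ]
  field_simp
  linear_combination sqrtD_sq hD - hdisc'

lemma two_dvd_disc_add (a b c : ℤ) : 2 ∣ b ^ 2 - 4 * a * c + b := by
  obtain ⟨t, ht⟩ := Int.even_mul_succ_self b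
  exact ⟨t - 2 * a * c, by linear_combination ht⟩

theorem stmt12_general (D a b c : ℤ) (hD : D < 0)
    (ha : 0 < a) (hprim : Int.gcd a (Int.gcd b c) = 1)
    (hdisc : b ^ 2 - 4 * a * c = D) :
    {x : ℂ | ∀ y ∈ {z : ℂ | ∃ m n : ℤ, z = (m : ℂ) * omegaQ D a b + (n : ℂ)},
        x * y ∈ {z : ℂ | ∃ m n : ℤ, z = (m : ℂ) * omegaQ D a b + (n : ℂ)}} =
      {z : ℂ | ∃ m n : ℤ, z = (m : ℂ) * (((D : ℂ) + sqrtD D) / 2) + (n : ℂ)} := by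
  obtain ⟨k, hk⟩ := hdisc ▸ two_dvd_disc_add a b c
  have hgen : ((D : ℂ) + sqrtD D) / 2 = a * omegaQ D a b + k := by
    have hk' : (D : ℂ) + b = 2 * k := by exact_mod_cast hk
    have ha' : (a : ℂ) ≠ 0 := by exact_mod_cast ha.ne'
    rw [omegaQ]
    field_simp
    linear_combination hk'
  change multipliers (intLattice (omegaQ D a b)) = intLattice (((D : ℂ) + sqrtD D) / 2)
  rw [hgen, intLattice_add_intCast]
  exact multipliers_intLattice_of_quadratic (omegaQ_im_ne_zero hD ha.ne' b) hprim
    (omegaQ_quadratic hD.le ha.ne' hdisc)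

theorem stmt12 (D a b c : ℤ) (hD : D < 0) (hDmod : D % 4 = 0 ∨ D % 4 = 1)
    (ha : 0 < a) (hprim : Int.gcd a (Int.gcd b c) = 1)
    (hdisc : b ^ 2 - 4 * a * c = D) :
    {x : ℂ | ∀ y ∈ {z : ℂ | ∃ m n : ℤ, z = (m : ℂ) * omegaQ D a b + (n : ℂ)},
        x * y ∈ {z : ℂ | ∃ m n : ℤ, z = (m : ℂ) * omegaQ D a b + (n : ℂ)}} =
      {z : ℂ | ∃ m n : ℤ, z = (m : ℂ) * (((D : ℂ) + sqrtD D) / 2) + (n : ℂ)} :=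
  stmt12_general D a b c hD ha hprim hdisc
end

section
/- Let D < 0 with D ≡ 0 or 1 (mod 4), N a positive integer, and Q = ax² + bxy + cy² ∈ 𝒬(D,N) (so gcd(a,N) = 1). Then a·(ℤω_Q + ℤ) is an 𝒪-ideal whose norm a is coprime to N, where 𝒪 is the order of discriminant D in K = ℚ(√D). -/
/-!
Put `β = a ω_Q = (-b + √D)/2`, a root of `X² + bX + ac`. Since `D ≡ b² ≡ b (mod 2)`,
`(D + √D)/2 = β + (D + b)/2` with `(D + b)/2 ∈ ℤ`, so `𝒪 = ℤβ + ℤ`, while the lattice is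
`ℤβ + ℤa`; it is stable under multiplication by `β` because `β² = -bβ - ac`. As `β ∉ ℝ`,
`(m, k) ↦ mβ + k` identifies `𝒪` with `ℤ²` and the lattice with `ℤ × aℤ`, of index `a`.
-/

open AddSubgroup

section Lattice

variable {R : Type*}

lemma closure_pair_add_intCast_one [Ring R] (z : R) (t : ℤ) :
    AddSubgroup.closure {z + t, 1} = AddSubgroup.closure ({z, 1} : Set R) := by
  have ht : ∀ {G : AddSubgroup R}, (1 : R) ∈ G → (t : R) ∈ G := fun h1 ↦ by
    simpa using zsmul_mem h1 t
  apply le_antisymm <;> rw [closure_le, Set.insert_subset_iff, Set.singleton_subset_iff]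
  · exact ⟨add_mem (subset_closure (by simp)) (ht (subset_closure (by simp))),
      subset_closure (by simp)⟩
  · refine ⟨?_, subset_closure (by simp)⟩
    have h := sub_mem (subset_closure (Set.mem_insert (z + t) {1})) (ht (subset_closure (by simp)))
    rwa [add_sub_cancel_right] at h

lemma setOf_eq_closure_pair [Ring R] (u v : R) :
    {z : R | ∃ m n : ℤ, z = (m : R) * u + (n : R) * v} = AddSubgroup.closure {u, v} := by
  ext z
  simp [mem_closure_pair, zsmul_eq_mul, eq_comm]

lemma closure_pair_intCast_le [Ring R] (z : R) (a : ℤ) :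
    AddSubgroup.closure {z, (a : R)} ≤ AddSubgroup.closure {z, 1} := by
  refine (closure_le _).2 (Set.insert_subset_iff.2 ⟨subset_closure (by simp), ?_⟩)
  simpa using zsmul_mem (subset_closure (by simp) : (1 : R) ∈ AddSubgroup.closure {z, 1}) a

variable [CommRing R] {β x y : R} {a b c : ℤ}

lemma mul_mem_closure_pair_of_sq_add (hβ : β ^ 2 + b * β + a * c = 0)
    (hy : y ∈ AddSubgroup.closure {β, (a : R)}) : β * y ∈ AddSubgroup.closure {β, (a : R)} := by
  induction hy using closure_induction with
  | mem y hy =>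
    rcases hy with h | h <;> rw [h]
    · refine mem_closure_pair.2 ⟨-b, -c, ?_⟩
      simp only [zsmul_eq_mul]
      push_cast
      linear_combination -hβ
    · exact mem_closure_pair.2 ⟨a, 0, by simp [mul_comm]⟩
  | zero => simp
  | add y y' _ _ h h' => simpa [mul_add] using add_mem h h'
  | neg y _ h => simpa using neg_mem h

lemma mul_mem_closure_pair_of_mem_closure_one (hβ : β ^ 2 + b * β + a * c = 0)
    (hx : x ∈ AddSubgroup.closure {β, 1}) (hy : y ∈ AddSubgroup.closure {β, (a : R)}) :
    x * y ∈ AddSubgroup.closure {β, (a : R)} := by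
  induction hx using closure_induction with
  | mem x hx =>
    rcases hx with h | h <;> rw [h]
    · exact mul_mem_closure_pair_of_sq_add hβ hy
    · simpa using hy
  | zero => simp
  | add x x' _ _ h h' => simpa [add_mul] using add_mem h h'
  | neg x _ h => simpa using neg_mem h

end Lattice

section Index

variable {z : ℂ}

def latticeHom (z : ℂ) : ℤ × ℤ →+ ℂ := (zmultiplesHom ℂ z).coprod (zmultiplesHom ℂ 1)

lemma latticeHom_apply (z : ℂ) (p : ℤ × ℤ) : latticeHom z p = p.1 • z + p.2 • 1 := rfl

lemma latticeHom_injective (hz : z.im ≠ 0) : Function.Injective (latticeHom z) := by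
  refine (injective_iff_map_eq_zero _).2 fun ⟨m, k⟩ h ↦ ?_
  rw [latticeHom_apply] at h
  have hm : m = 0 := by simpa [hz] using congrArg Complex.im h
  subst hm
  simpa using h

lemma closure_pair_natCast_eq_map (z : ℂ) (n : ℕ) :
    AddSubgroup.closure {z, (n : ℂ)} =
      ((⊤ : AddSubgroup ℤ).prod (zmultiples (n : ℤ))).map (latticeHom z) := by
  ext x
  simp only [mem_closure_pair, mem_map, mem_prod, mem_top, true_and, Int.mem_zmultiples_iff,
    Prod.exists, latticeHom_apply]
  constructor
  · rintro ⟨m, k, rfl⟩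
    exact ⟨m, k * n, dvd_mul_left _ _, by simp [mul_smul]⟩
  · rintro ⟨m, _, ⟨k, rfl⟩, rfl⟩
    exact ⟨m, k, by simp [mul_comm]⟩

lemma relIndex_closure_pair_natCast (hz : z.im ≠ 0) (n : ℕ) :
    (AddSubgroup.closure {z, (n : ℂ)}).relIndex (AddSubgroup.closure {z, 1}) = n := by
  have h1 := closure_pair_natCast_eq_map z 1
  rw [Nat.cast_one, Nat.cast_one, Int.zmultiples_one, top_prod_top] at h1
  rw [closure_pair_natCast_eq_map, h1, relIndex_map_map_of_injective _ _ (latticeHom_injective hz),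
    relIndex_top_right, index_prod, index_top, Int.index_zmultiples, one_mul, Int.natAbs_natCast]

end Index

section Quadratic

variable {D a b c : ℤ}

lemma sqrtD_mul_self (hD : D ≤ 0) : sqrtD D * sqrtD D = D := by
  have h : (Real.sqrt (-(D : ℝ)) : ℂ) * Real.sqrt (-(D : ℝ)) = -(D : ℂ) := by
    rw [← Complex.ofReal_mul, Real.mul_self_sqrt (by simp [hD])]
    push_cast; ring
  rw [sqrtD, mul_mul_mul_comm, h, Complex.I_mul_I]
  ring

lemma sqrtD_im_ne_zero (hD : D < 0) : (sqrtD D).im ≠ 0 := by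
  simpa [sqrtD] using (Real.sqrt_pos.2 (by simpa using hD)).ne'

lemma mul_omegaQ (ha : a ≠ 0) : a * omegaQ D a b = (-b + sqrtD D) / 2 := by
  rw [omegaQ]
  field_simp

lemma mul_omegaQ_sq_add (ha : a ≠ 0) (hD : D ≤ 0) (hdisc : b ^ 2 - 4 * a * c = D) :
    (a * omegaQ D a b) ^ 2 + b * (a * omegaQ D a b) + a * c = 0 := by
  have hdisc' : (b : ℂ) ^ 2 - 4 * a * c = D := by exact_mod_cast hdisc
  rw [mul_omegaQ ha]
  linear_combination (sqrtD_mul_self hD - hdisc') / 4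

lemma exists_add_sqrtD_div_two_eq_mul_omegaQ_add (ha : a ≠ 0) (hdisc : b ^ 2 - 4 * a * c = D) :
    ∃ t : ℤ, ((D : ℂ) + sqrtD D) / 2 = a * omegaQ D a b + t := by
  obtain ⟨k, hk⟩ := Int.even_mul_succ_self b
  obtain ⟨t, ht⟩ : ∃ t : ℤ, D + b = 2 * t := ⟨k - 2 * a * c, by linear_combination hk - hdisc⟩
  refine ⟨t, ?_⟩
  have ht' : (D : ℂ) + b = 2 * t := by exact_mod_cast ht
  rw [mul_omegaQ ha]
  linear_combination ht' / 2

end Quadratic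

theorem stmt13_general (N : ℕ) (D a b c : ℤ) (hD : D < 0)
    (ha : 0 < a) (hdisc : b ^ 2 - 4 * a * c = D)
    (haN : Int.gcd a N = 1) :
    -- the lattice a·(ℤω_Q + ℤ) is contained in the order 𝒪 = ℤ·(D+√D)/2 + ℤ,
    ({z : ℂ | ∃ m n : ℤ, z = (m : ℂ) * ((a : ℂ) * omegaQ D a b) + (n : ℂ) * (a : ℂ)} ⊆
        {z : ℂ | ∃ m n : ℤ, z = (m : ℂ) * (((D : ℂ) + sqrtD D) / 2) + (n : ℂ)}) ∧
      -- it is an 𝒪-ideal,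
      (∀ x ∈ {z : ℂ | ∃ m n : ℤ, z = (m : ℂ) * (((D : ℂ) + sqrtD D) / 2) + (n : ℂ)},
        ∀ y ∈ {z : ℂ | ∃ m n : ℤ, z = (m : ℂ) * ((a : ℂ) * omegaQ D a b) + (n : ℂ) * (a : ℂ)},
          x * y ∈
            {z : ℂ | ∃ m n : ℤ, z = (m : ℂ) * ((a : ℂ) * omegaQ D a b) + (n : ℂ) * (a : ℂ)}) ∧
      -- its norm, i.e. its index in 𝒪, equals a,
      ((AddSubgroup.closure {(a : ℂ) * omegaQ D a b, (a : ℂ)}).addSubgroupOf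
          (AddSubgroup.closure {((D : ℂ) + sqrtD D) / 2, 1})).index = a.toNat ∧
      -- and this norm a is coprime to N.
      Int.gcd a N = 1 := by
  obtain ⟨t, hθ⟩ := exists_add_sqrtD_div_two_eq_mul_omegaQ_add ha.ne' hdisc
  have hβ := mul_omegaQ_sq_add ha.ne' hD.le hdisc
  set β := (a : ℂ) * omegaQ D a b
  have hO : AddSubgroup.closure {((D : ℂ) + sqrtD D) / 2, 1} = AddSubgroup.closure {β, 1} := by
    rw [hθ, closure_pair_add_intCast_one]
  have hOset : {z : ℂ | ∃ m n : ℤ, z = (m : ℂ) * (((D : ℂ) + sqrtD D) / 2) + (n : ℂ)} =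
      AddSubgroup.closure {β, 1} := by
    simpa [← hO] using setOf_eq_closure_pair (((D : ℂ) + sqrtD D) / 2) 1
  have hβ_im : β.im ≠ 0 := by
    simpa [β, mul_omegaQ ha.ne'] using sqrtD_im_ne_zero hD
  rw [hOset, setOf_eq_closure_pair, hO]
  refine ⟨?_, fun x hx y hy ↦ mul_mem_closure_pair_of_mem_closure_one hβ hx hy, ?_, haN⟩
  · exact SetLike.coe_subset_coe.2 (closure_pair_intCast_le β a)
  · have ha_toNat : (a : ℂ) = (a.toNat : ℂ) := by
      exact_mod_cast (Int.toNat_of_nonneg ha.le).symm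
    rw [ha_toNat]
    exact relIndex_closure_pair_natCast hβ_im a.toNat

theorem stmt13 (N : ℕ) (hN : 0 < N) (D a b c : ℤ) (hD : D < 0)
    (hDmod : D % 4 = 0 ∨ D % 4 = 1) (ha : 0 < a)
    (hprim : Int.gcd a (Int.gcd b c) = 1) (hdisc : b ^ 2 - 4 * a * c = D)
    (haN : Int.gcd a N = 1) :
    -- the lattice a·(ℤω_Q + ℤ) is contained in the order 𝒪 = ℤ·(D+√D)/2 + ℤ,
    ({z : ℂ | ∃ m n : ℤ, z = (m : ℂ) * ((a : ℂ) * omegaQ D a b) + (n : ℂ) * (a : ℂ)} ⊆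
        {z : ℂ | ∃ m n : ℤ, z = (m : ℂ) * (((D : ℂ) + sqrtD D) / 2) + (n : ℂ)}) ∧
      -- it is an 𝒪-ideal,
      (∀ x ∈ {z : ℂ | ∃ m n : ℤ, z = (m : ℂ) * (((D : ℂ) + sqrtD D) / 2) + (n : ℂ)},
        ∀ y ∈ {z : ℂ | ∃ m n : ℤ, z = (m : ℂ) * ((a : ℂ) * omegaQ D a b) + (n : ℂ) * (a : ℂ)},
          x * y ∈
            {z : ℂ | ∃ m n : ℤ, z = (m : ℂ) * ((a : ℂ) * omegaQ D a b) + (n : ℂ) * (a : ℂ)}) ∧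
      -- its norm, i.e. its index in 𝒪, equals a,
      ((AddSubgroup.closure {(a : ℂ) * omegaQ D a b, (a : ℂ)}).addSubgroupOf
          (AddSubgroup.closure {((D : ℂ) + sqrtD D) / 2, 1})).index = a.toNat ∧
      -- and this norm a is coprime to N.
      Int.gcd a N = 1 :=
  stmt13_general N D a b c hD ha hdisc haN
end
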